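/- Let a₀, b₀, a₁ be a V-path in which a₀ is a face sequence of type 5. Then a₁ is of type 1 or of type 6. -/

import Mathlib

set_option linter.unusedVariables false

/-- The alphabet `{0, 1, ∗}` for face sequences. -/
inductive Letter : Type
  | zero
  | one
  | star
  deriving DecidableEq

/-- A sequence of length `n` over the alphabet `{0, 1, ∗}`. -/
abbrev FSeq (n : ℕ) := Fin n → Letter

/-- `S(1)`, the number of `1`'s in `S`. -/
def count1 {n : ℕ} (S : FSeq n) : ℕ := (Finset.univ.filter fun i => S i = Letter.one).card

/-- `S(0)`, the number of `0`'s in `S`. -/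
def count0 {n : ℕ} (S : FSeq n) : ℕ := (Finset.univ.filter fun i => S i = Letter.zero).card

/-- The number of `∗`'s in `S`. -/
def countStar {n : ℕ} (S : FSeq n) : ℕ := (Finset.univ.filter fun i => S i = Letter.star).card

/-- A face sequence: either no `∗` and exactly `k` ones, or at most `k-1` ones and
(#ones) + (#stars) ≥ `k+1`. -/
def FaceSeq {n : ℕ} (k : ℕ) (S : FSeq n) : Prop :=
  (countStar S = 0 ∧ count1 S = k) ∨ (count1 S + 1 ≤ k ∧ k + 1 ≤ count1 S + countStar S)

/-- `v₀`, the sequence of `k` ones followed by `n - k` zeros. -/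
def v0seq (n k : ℕ) : FSeq n := fun i => if (i : ℕ) < k then Letter.one else Letter.zero

/-- `S` contains at least one `∗`. -/
def hasStar {n : ℕ} (S : FSeq n) : Prop := ∃ i, S i = Letter.star

/-- There is a `1` to the right of the rightmost `∗` (in particular `S` contains a `∗`). -/
def OneRight {n : ℕ} (S : FSeq n) : Prop :=
  hasStar S ∧ ∃ i, S i = Letter.one ∧ ∀ j, i < j → S j ≠ Letter.star

/-- There is no `1` to the right of the rightmost `∗` (and `S` contains a `∗`). -/
def NoOneRight {n : ℕ} (S : FSeq n) : Prop :=
  hasStar S ∧ ∀ i, S i = Letter.one → ∃ j, i < j ∧ S j = Letter.star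

/-- There is a `0` to the left of the leftmost `∗` (in particular `S` contains a `∗`). -/
def ZeroLeft {n : ℕ} (S : FSeq n) : Prop :=
  hasStar S ∧ ∃ i, S i = Letter.zero ∧ ∀ j, j < i → S j ≠ Letter.star

/-- There is no `0` to the left of the leftmost `∗` (and `S` contains a `∗`). -/
def NoZeroLeft {n : ℕ} (S : FSeq n) : Prop :=
  hasStar S ∧ ∀ i, S i = Letter.zero → ∃ j, j < i ∧ S j = Letter.star

/-- `i` is the position of the rightmost `1` of `S`. -/
def IsRightmostOne {n : ℕ} (S : FSeq n) (i : Fin n) : Prop :=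
  S i = Letter.one ∧ ∀ j, i < j → S j ≠ Letter.one

/-- `i` is the position of the rightmost `∗` of `S`. -/
def IsRightmostStar {n : ℕ} (S : FSeq n) (i : Fin n) : Prop :=
  S i = Letter.star ∧ ∀ j, i < j → S j ≠ Letter.star

/-- `i` is the position of the leftmost `0` of `S`. -/
def IsLeftmostZero {n : ℕ} (S : FSeq n) (i : Fin n) : Prop :=
  S i = Letter.zero ∧ ∀ j, j < i → S j ≠ Letter.zero

/-- `i` is the position of the leftmost `∗` of `S`. -/
def IsLeftmostStar {n : ℕ} (S : FSeq n) (i : Fin n) : Prop :=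
  S i = Letter.star ∧ ∀ j, j < i → S j ≠ Letter.star

/-- Condition of rule (1), subcondition (a). -/
def Cond1a {n : ℕ} (k m0 m1 : ℕ) (S : FSeq n) : Prop :=
  count1 S + 1 ≤ k ∧ OneRight S ∧ count1 S ≠ m1

/-- Condition of rule (1), subcondition (b). -/
def Cond1b {n : ℕ} (k m0 m1 : ℕ) (S : FSeq n) : Prop :=
  count1 S + 1 ≤ k ∧ OneRight S ∧ count1 S = m1 ∧ m0 < count0 S

/-- Condition of rule (1), subcondition (c): no `0` to the left of the leftmost `∗`. -/
def Cond1c {n : ℕ} (k m0 m1 : ℕ) (S : FSeq n) : Prop :=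
  count1 S + 1 ≤ k ∧ OneRight S ∧ count1 S = m1 ∧ count0 S = m0 ∧ NoZeroLeft S

/-- Condition of rule (2), subcondition (a): here `count1 S + 1 ≠ m1` encodes `S(1) ≠ m₁ - 1`. -/
def Cond2a {n : ℕ} (k m0 m1 : ℕ) (S : FSeq n) : Prop :=
  count1 S + 2 ≤ k ∧ NoOneRight S ∧ count1 S + 1 ≠ m1

/-- Condition of rule (2), subcondition (b). -/
def Cond2b {n : ℕ} (k m0 m1 : ℕ) (S : FSeq n) : Prop :=
  count1 S + 2 ≤ k ∧ NoOneRight S ∧ count1 S + 1 = m1 ∧ m0 < count0 S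

/-- Condition of rule (2), subcondition (c). -/
def Cond2c {n : ℕ} (k m0 m1 : ℕ) (S : FSeq n) : Prop :=
  count1 S + 2 ≤ k ∧ NoOneRight S ∧ count1 S + 1 = m1 ∧ count0 S = m0 ∧ NoZeroLeft S

/-- `S` is of type 1 (satisfies the condition of rule (1)). -/
def Type1 {n : ℕ} (k m0 m1 : ℕ) (S : FSeq n) : Prop :=
  Cond1a k m0 m1 S ∨ Cond1b k m0 m1 S ∨ Cond1c k m0 m1 S

/-- `S` is of type 2 (satisfies the condition of rule (2)). -/
def Type2 {n : ℕ} (k m0 m1 : ℕ) (S : FSeq n) : Prop :=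
  Cond2a k m0 m1 S ∨ Cond2b k m0 m1 S ∨ Cond2c k m0 m1 S

/-- `S` is of type 3: `S(1) = k-1`, `S(0) ≤ n-k-1`, no `1` right of the rightmost `∗`,
a `0` left of the leftmost `∗`. -/
def Type3 {n : ℕ} (k : ℕ) (S : FSeq n) : Prop :=
  count1 S + 1 = k ∧ count0 S + k + 1 ≤ n ∧ NoOneRight S ∧ ZeroLeft S

/-- `S` is of type 4: `S(1) = k-1`, `S(0) ≤ n-k-2`, no `1` right of the rightmost `∗`,
no `0` left of the leftmost `∗`. -/
def Type4 {n : ℕ} (k : ℕ) (S : FSeq n) : Prop :=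
  count1 S + 1 = k ∧ count0 S + k + 2 ≤ n ∧ NoOneRight S ∧ NoZeroLeft S

/-- `S` is of type 5: `S(1) = m₁`, `S(0) ≤ m₀`, a `1` right of the rightmost `∗`,
a `0` left of the leftmost `∗`. -/
def Type5 {n : ℕ} (m0 m1 : ℕ) (S : FSeq n) : Prop :=
  count1 S = m1 ∧ count0 S ≤ m0 ∧ OneRight S ∧ ZeroLeft S

/-- `S` is of type 6: `S(1) = m₁`, `S(0) < m₀`, a `1` right of the rightmost `∗`,
no `0` left of the leftmost `∗`. -/
def Type6 {n : ℕ} (m0 m1 : ℕ) (S : FSeq n) : Prop :=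
  count1 S = m1 ∧ count0 S < m0 ∧ OneRight S ∧ NoZeroLeft S

/-- `S` is of type 7: `S(1) = m₁-1`, `S(0) ≤ m₀`, no `1` right of the rightmost `∗`,
a `0` left of the leftmost `∗`. -/
def Type7 {n : ℕ} (m0 m1 : ℕ) (S : FSeq n) : Prop :=
  count1 S + 1 = m1 ∧ count0 S ≤ m0 ∧ NoOneRight S ∧ ZeroLeft S

/-- `S` is of type 8: `S(1) = m₁-1`, `S(0) < m₀`, no `1` right of the rightmost `∗`,
no `0` left of the leftmost `∗`. -/
def Type8 {n : ℕ} (m0 m1 : ℕ) (S : FSeq n) : Prop :=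
  count1 S + 1 = m1 ∧ count0 S < m0 ∧ NoOneRight S ∧ NoZeroLeft S

/-- `S` is of type 9: `S(1) = k`, `S(0) = n-k`, and `S ≠ v₀`. -/
def Type9 {n : ℕ} (k : ℕ) (S : FSeq n) : Prop :=
  count1 S = k ∧ count0 S + k = n ∧ S ≠ v0seq n k

/-- `S` is of type 10: `S(1) = k-1`, `S(0) = n-k-1`, no `1` right of the rightmost `∗`,
no `0` left of the leftmost `∗`. -/
def Type10 {n : ℕ} (k : ℕ) (S : FSeq n) : Prop :=
  count1 S + 1 = k ∧ count0 S + k + 1 = n ∧ NoOneRight S ∧ NoZeroLeft S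

/-- `S` is of type `i` for `1 ≤ i ≤ 10` (and of no type otherwise). -/
def OfType {n : ℕ} (k m0 m1 : ℕ) (i : ℕ) (S : FSeq n) : Prop :=
  match i with
  | 1 => Type1 k m0 m1 S
  | 2 => Type2 k m0 m1 S
  | 3 => Type3 k S
  | 4 => Type4 k S
  | 5 => Type5 m0 m1 S
  | 6 => Type6 m0 m1 S
  | 7 => Type7 m0 m1 S
  | 8 => Type8 m0 m1 S
  | 9 => Type9 k S
  | 10 => Type10 k S
  | _ => False

/-- The replacement of rule (1): replace the rightmost `1` with `∗`. -/
def Apply1 {n : ℕ} (S S' : FSeq n) : Prop :=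
  ∃ i, IsRightmostOne S i ∧ S' = Function.update S i Letter.star

/-- The replacement of rule (2): replace the rightmost `∗` with `1`. -/
def Apply2 {n : ℕ} (S S' : FSeq n) : Prop :=
  ∃ i, IsRightmostStar S i ∧ S' = Function.update S i Letter.one

/-- The replacement of rules (3), (5) and (7): replace the leftmost `0` with `∗`. -/
def Apply3 {n : ℕ} (S S' : FSeq n) : Prop :=
  ∃ i, IsLeftmostZero S i ∧ S' = Function.update S i Letter.star

/-- The replacement of rules (4), (6) and (8): replace the leftmost `∗` with `0`. -/
def Apply4 {n : ℕ} (S S' : FSeq n) : Prop :=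
  ∃ i, IsLeftmostStar S i ∧ S' = Function.update S i Letter.zero

/-- The replacement of rule (9): replace the leftmost `0` and the rightmost `1` each with `∗`. -/
def Apply9 {n : ℕ} (S S' : FSeq n) : Prop :=
  ∃ i j, IsLeftmostZero S i ∧ IsRightmostOne S j ∧
    S' = Function.update (Function.update S i Letter.star) j Letter.star

/-- The replacement of rule (10): replace the leftmost `∗` with `0` and the other `∗` with `1`. -/
def Apply10 {n : ℕ} (S S' : FSeq n) : Prop :=
  ∃ i j, IsLeftmostStar S i ∧ IsRightmostStar S j ∧ i ≠ j ∧
    S' = Function.update (Function.update S i Letter.zero) j Letter.one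

/-- The matching `V` on face sequences: a face sequence `S` of type 1, 3, 5, 7 or 9 is
matched with the result `S'` of applying the corresponding rule to it. -/
def Vmatch {n : ℕ} (k m0 m1 : ℕ) (S S' : FSeq n) : Prop :=
  FaceSeq k S ∧
    ((Type1 k m0 m1 S ∧ Apply1 S S') ∨
     (Type3 k S ∧ Apply3 S S') ∨
     (Type5 m0 m1 S ∧ Apply3 S S') ∨
     (Type7 m0 m1 S ∧ Apply3 S S') ∨
     (Type9 k S ∧ Apply9 S S'))

/-- The vertex set of a face sequence `S`: the vertex sequences (0/1-sequences with
exactly `k` ones) agreeing with `S` wherever `S` is not `∗`. -/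
def VertexSet {n : ℕ} (k : ℕ) (S : FSeq n) : Set (FSeq n) :=
  {v | (∀ i, v i ≠ Letter.star) ∧ count1 v = k ∧ ∀ i, S i ≠ Letter.star → v i = S i}

/-- The dimension of the face `F(S)`. -/
def fdim {n : ℕ} (S : FSeq n) : ℕ :=
  if countStar S = 0 then 0 else countStar S - 1

/-- `T` is a codimension-1 face of `S`. -/
def Codim1 {n : ℕ} (k : ℕ) (T S : FSeq n) : Prop :=
  VertexSet k T ⊂ VertexSet k S ∧ fdim T + 1 = fdim S

/-- A (nontrivial) `V`-path `a₀, b₀, a₁, b₁, …, b_r, a_{r+1}` of face sequences. -/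
structure VPath (n k m0 m1 r : ℕ) where
  a : Fin (r + 2) → FSeq n
  b : Fin (r + 1) → FSeq n
  face_a : ∀ i, FaceSeq k (a i)
  face_b : ∀ i, FaceSeq k (b i)
  mem : ∀ i : Fin (r + 1), Vmatch k m0 m1 (a i.castSucc) (b i)
  codim_left : ∀ i : Fin (r + 1), Codim1 k (a i.castSucc) (b i)
  codim_right : ∀ i : Fin (r + 1), Codim1 k (a i.succ) (b i)
  step_ne : ∀ i : Fin (r + 1), a i.castSucc ≠ a i.succ

/-!
The face `a₀` has a `1` to the right of its rightmost `∗` and a `0` to the left of its leftmost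
`∗`, so among the matching rules only rule (5) applies to it: `b₀` is `a₀` with its leftmost `0`
(at position `i₀`) turned into `∗`. Since vertex sets detect exactly the non-`∗` positions, a
codimension-one face `a₁` of `b₀` is `b₀` with a single `∗` fixed to `1` or `0`; and because the
rightmost `1` of `a₀` lies beyond every `∗` of `b₀`, `a₁` still has a `1` to the right of its
rightmost `∗`. Fixing a `∗` to `1` gives `m₁ + 1` ones, hence type 1(a). Fixing it to `0` cannot
happen at `i₀` (that would give back `a₀`), so `a₁` is `a₀` with its leftmost `0` and one of its
`∗`'s exchanged: the counts of `a₀` are kept, and only `1`'s now precede the `∗` at `i₀`, which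
gives type 1(c) when `S(0) = m₀` and type 6 when `S(0) < m₀`.
-/

open Finset Function

section

section Counting

variable {ι β : Type*} [Fintype ι] [DecidableEq ι] [DecidableEq β]

lemma card_filter_update_add (f : ι → β) (i : ι) (c b : β) :
    #{j | update f i c j = b} + (if f i = b then 1 else 0) =
      #{j | f j = b} + (if c = b then 1 else 0) := by
  simp only [card_filter]
  rw [← sum_erase_add _ _ (mem_univ i), ← sum_erase_add _ _ (mem_univ i)]
  rw [sum_congr rfl fun j hj => by rw [update_of_ne (ne_of_mem_erase hj)]]
  simp only [update_self]
  ring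

lemma card_filter_update_of_ne_of_ne {f : ι → β} {i : ι} {c b : β} (hfi : f i ≠ b)
    (hc : c ≠ b) : #{j | update f i c j = b} = #{j | f j = b} := by
  simpa [hfi, hc] using card_filter_update_add f i c b

lemma card_filter_update_self_eq {f : ι → β} {i : ι} {b : β} (hfi : f i ≠ b) :
    #{j | update f i b j = b} = #{j | f j = b} + 1 := by
  simpa [hfi] using card_filter_update_add f i b b

lemma card_filter_update_add_one {f : ι → β} {i : ι} {c b : β} (hfi : f i = b) (hc : c ≠ b) :
    #{j | update f i c j = b} + 1 = #{j | f j = b} := by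
  simpa [hfi, hc] using card_filter_update_add f i c b

end Counting

variable {n k : ℕ}

lemma hasStar_iff_countStar_pos {S : FSeq n} : hasStar S ↔ 0 < countStar S := by
  simp [hasStar, countStar, card_pos, filter_nonempty_iff]

lemma FaceSeq.count_bounds {S : FSeq n} (hS : FaceSeq k S) (hstar : hasStar S) :
    count1 S + 1 ≤ k ∧ k + 1 ≤ count1 S + countStar S :=
  hS.resolve_left fun h => (hasStar_iff_countStar_pos.mp hstar).ne' h.1

section VertexSet

def fillStars (T : FSeq n) (A : Finset (Fin n)) : FSeq n :=
  fun j => if j ∈ A then .one else if T j = .star then .zero else T j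

lemma fillStars_mem_vertexSet {T : FSeq n} {A : Finset (Fin n)}
    (hA : ∀ j ∈ A, T j = .star) (hcard : #A + count1 T = k) :
    fillStars T A ∈ VertexSet k T := by
  have hones : ({j | fillStars T A j = .one} : Finset (Fin n)) =
      A ∪ ({j | T j = .one} : Finset (Fin n)) := by
    ext j
    by_cases hj : j ∈ A
    · simp [fillStars, hj]
    · cases h : T j <;> simp [fillStars, hj, h]
  have hdisj : Disjoint A ({j | T j = .one} : Finset (Fin n)) :=
    disjoint_left.mpr fun j hj hj' => by simp [hA j hj] at hj'
  refine ⟨fun j => ?_, ?_, fun j hj => ?_⟩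
  · by_cases hj : j ∈ A
    · simp [fillStars, hj]
    · cases h : T j <;> simp [fillStars, hj, h]
  · rw [count1, hones, card_union_of_disjoint hdisj, ← hcard]
    rfl
  · simp [fillStars, hj, show j ∉ A from fun h => hj (hA j h)]

lemma exists_mem_vertexSet_apply_eq {T : FSeq n}
    (hT : count1 T + 1 ≤ k ∧ k + 1 ≤ count1 T + countStar T) {i : Fin n}
    (hi : T i = .star) {ℓ : Letter} (hℓ : ℓ ≠ .star) :
    ∃ v ∈ VertexSet k T, v i = ℓ := by
  set stars : Finset (Fin n) := {j | T j = .star}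
  have hi_mem : i ∈ stars := by simp [stars, hi]
  have hcard : #(stars.erase i) + 1 = countStar T := card_erase_add_one hi_mem
  have hsub : ∀ {A}, A ⊆ stars.erase i → ∀ j ∈ A, T j = .star := fun hA j hj =>
    (mem_filter.mp (mem_of_mem_erase (hA hj))).2
  cases ℓ with
  | star => exact absurd rfl hℓ
  | zero =>
    obtain ⟨A, hA, hAcard⟩ := exists_subset_card_eq (s := stars.erase i) (n := k - count1 T)
      (by omega)
    have hiA : i ∉ A := fun h => (mem_erase.mp (hA h)).1 rfl
    exact ⟨_, fillStars_mem_vertexSet (hsub hA) (by omega), by simp [fillStars, hiA, hi]⟩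
  | one =>
    obtain ⟨B, hB, hBcard⟩ := exists_subset_card_eq (s := stars.erase i)
      (n := k - count1 T - 1) (by omega)
    have hiB : i ∉ B := fun h => (mem_erase.mp (hB h)).1 rfl
    refine ⟨fillStars T (insert i B), fillStars_mem_vertexSet ?_ ?_, by simp [fillStars]⟩
    · simpa [hi] using hsub hB
    · rw [card_insert_of_notMem hiB]
      omega

variable {T S : FSeq n}

lemma apply_eq_star_of_vertexSet_subset
    (hT : count1 T + 1 ≤ k ∧ k + 1 ≤ count1 T + countStar T)
    (hsub : VertexSet k T ⊆ VertexSet k S) {i : Fin n} (hi : T i = .star) : S i = .star := by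
  by_contra hSi
  obtain ⟨v, hv, hvi⟩ := exists_mem_vertexSet_apply_eq hT hi (ℓ := .one) (by simp)
  obtain ⟨w, hw, hwi⟩ := exists_mem_vertexSet_apply_eq hT hi (ℓ := .zero) (by simp)
  have : v i = w i := ((hsub hv).2.2 i hSi).trans ((hsub hw).2.2 i hSi).symm
  simp [hvi, hwi] at this

lemma apply_eq_of_vertexSet_subset
    (hT : count1 T + 1 ≤ k ∧ k + 1 ≤ count1 T + countStar T)
    (hsub : VertexSet k T ⊆ VertexSet k S) {i : Fin n} (hSi : S i ≠ .star) : T i = S i := by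
  have hTi : T i ≠ .star := fun h => hSi (apply_eq_star_of_vertexSet_subset hT hsub h)
  obtain ⟨q, hq⟩ : hasStar T := hasStar_iff_countStar_pos.mpr (by omega)
  obtain ⟨v, hv, -⟩ := exists_mem_vertexSet_apply_eq hT hq (ℓ := .one) (by simp)
  exact (hv.2.2 i hTi).symm.trans ((hsub hv).2.2 i hSi)

lemma Codim1.countStar_add_one (hTS : Codim1 k T S) (hS : 3 ≤ countStar S) :
    countStar T + 1 = countStar S := by
  have := hTS.2
  unfold fdim at this
  split_ifs at this <;> omega

lemma Codim1.hasStar (hT : FaceSeq k T) (hTS : Codim1 k T S) (hS : 3 ≤ countStar S) :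
    hasStar T := by
  have := hTS.countStar_add_one hS
  rcases hT with h | h <;> exact hasStar_iff_countStar_pos.mpr (by omega)

lemma exists_eq_update_of_codim1 (hT : FaceSeq k T) (hTS : Codim1 k T S)
    (hS : 3 ≤ countStar S) : ∃ p, S p = .star ∧ T p ≠ .star ∧ T = update S p (T p) := by
  have hcount := hTS.countStar_add_one hS
  have hT' := hT.count_bounds (hTS.hasStar hT hS)
  have hsub := hTS.1.subset
  set starsT : Finset (Fin n) := {j | T j = .star}
  set starsS : Finset (Fin n) := {j | S j = .star}
  have hstars : starsT ⊆ starsS := fun j hj => by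
    simpa [starsS] using apply_eq_star_of_vertexSet_subset hT' hsub (mem_filter.mp hj).2
  change #starsT + 1 = #starsS at hcount
  obtain ⟨p, hp⟩ : ∃ p, starsS \ starsT = {p} :=
    card_eq_one.mp (by rw [card_sdiff_of_subset hstars]; omega)
  have hmem : ∀ j, (S j = .star ∧ T j ≠ .star) ↔ j = p := fun j => by
    simpa [starsS, starsT] using congrArg (j ∈ ·) hp
  obtain ⟨hSp, hTp⟩ := (hmem p).mpr rfl
  refine ⟨p, hSp, hTp, funext fun j => ?_⟩
  rcases eq_or_ne j p with rfl | hjp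
  · simp
  rw [update_of_ne hjp]
  by_cases hSj : S j = .star
  · by_contra hTj
    exact hjp ((hmem j).mp ⟨hSj, fun h => hTj (h.trans hSj.symm)⟩)
  · exact apply_eq_of_vertexSet_subset hT' hsub hSj

end VertexSet

section Positions

variable {S : FSeq n}

lemma OneRight.not_noOneRight (h : OneRight S) : ¬NoOneRight S := fun h' => by
  obtain ⟨-, i, hi, hright⟩ := h
  obtain ⟨j, hij, hj⟩ := h'.2 i hi
  exact hright j hij hj

lemma ZeroLeft.not_noZeroLeft (h : ZeroLeft S) : ¬NoZeroLeft S := fun h' => by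
  obtain ⟨-, i, hi, hleft⟩ := h
  obtain ⟨j, hji, hj⟩ := h'.2 i hi
  exact hleft j hji hj

lemma IsLeftmostZero.apply_eq_one_of_lt {i j : Fin n} (hi : IsLeftmostZero S i) (hZ : ZeroLeft S)
    (hji : j < i) : S j = .one := by
  obtain ⟨-, z, hz, hleft⟩ := hZ
  have hiz : i ≤ z := not_lt.mp fun hzi => hi.2 z hzi hz
  have hj_star := hleft j (hji.trans_le hiz)
  have hj_zero := hi.2 j hji
  cases h : S j <;> simp_all

lemma IsLeftmostZero.lt_of_apply_eq_star {i q : Fin n} (hi : IsLeftmostZero S i)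
    (hZ : ZeroLeft S) (hq : S q = .star) : i < q := by
  rcases lt_trichotomy q i with hqi | rfl | hiq
  · simp [hi.apply_eq_one_of_lt hZ hqi] at hq
  · simp [hi.1] at hq
  · exact hiq

lemma OneRight.update_star {i q : Fin n} (h : OneRight S) (hq : S q = .star) (hiq : i ≤ q) :
    OneRight (update S i .star) := by
  obtain ⟨-, w, hw, hright⟩ := h
  have hqw : q < w := lt_of_le_of_ne (not_lt.mp fun hwq => hright q hwq hq)
    fun h => by simp [h, hw] at hq
  refine ⟨⟨i, by simp⟩, w, ?_, fun j hwj => ?_⟩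
  · rwa [update_of_ne (hiq.trans_lt hqw).ne']
  · rw [update_of_ne (hiq.trans_lt (hqw.trans hwj)).ne']
    exact hright j hwj

lemma IsLeftmostZero.oneRight_update_star {i : Fin n} (hi : IsLeftmostZero S i)
    (hZ : ZeroLeft S) (hOR : OneRight S) : OneRight (update S i .star) :=
  let ⟨_, hq⟩ := hOR.1
  hOR.update_star hq (hi.lt_of_apply_eq_star hZ hq).le

lemma OneRight.update_of_apply_eq_star {p : Fin n} {ℓ : Letter} (h : OneRight S)
    (hp : S p = .star) (hℓ : ℓ ≠ .star) (hstar : hasStar (update S p ℓ)) :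
    OneRight (update S p ℓ) := by
  obtain ⟨-, w, hw, hright⟩ := h
  have hpw : p ≠ w := fun h => by simp [h, hw] at hp
  refine ⟨hstar, w, by rwa [update_of_ne hpw.symm], fun j hwj => ?_⟩
  rcases eq_or_ne j p with rfl | hjp
  · simpa using hℓ
  · rw [update_of_ne hjp]
    exact hright j hwj

lemma noZeroLeft_of_forall_lt {i : Fin n} (hi : S i = .star) (h : ∀ j < i, S j ≠ .zero) :
    NoZeroLeft S := by
  refine ⟨⟨i, hi⟩, fun j hj => ⟨i, ?_, hi⟩⟩
  rcases lt_trichotomy j i with hji | rfl | hij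
  · exact absurd hj (h j hji)
  · simp [hi] at hj
  · exact hij

lemma IsLeftmostZero.noZeroLeft_update_update {i p : Fin n} (hi : IsLeftmostZero S i)
    (hZ : ZeroLeft S) (hp : S p = .star) :
    NoZeroLeft (update (update S i .star) p .zero) := by
  have hip := hi.lt_of_apply_eq_star hZ hp
  refine noZeroLeft_of_forall_lt (i := i) (by simp [update_of_ne hip.ne]) fun j hji => ?_
  rw [update_of_ne (hji.trans hip).ne, update_of_ne hji.ne, hi.apply_eq_one_of_lt hZ hji]
  simp

end Positions

variable {m0 m1 : ℕ}

lemma Vmatch.apply3_of_type5 {S S' : FSeq n} (hV : Vmatch k m0 m1 S S')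
    (h5 : Type5 m0 m1 S) : Apply3 S S' := by
  obtain ⟨hc1, hc0, hOR, hZL⟩ := h5
  have hbounds := hV.1.count_bounds hOR.1
  rcases hV.2 with ⟨h1 | h1 | h1, -⟩ | ⟨h3, -⟩ | ⟨-, h⟩ | ⟨h7, -⟩ | ⟨h9, -⟩
  · exact absurd hc1 h1.2.2
  · exact absurd h1.2.2.2 (by omega)
  · exact absurd h1.2.2.2.2 hZL.not_noZeroLeft
  · exact absurd h3.2.2.1 hOR.not_noOneRight
  · exact h
  · exact absurd h7.1 (by omega)
  · exact absurd h9.1 (by omega)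

lemma type1_or_type6_of_noZeroLeft {S : FSeq n} (hk : count1 S + 1 ≤ k) (hOR : OneRight S)
    (hNZL : NoZeroLeft S) (h1 : count1 S = m1) (h0 : count0 S ≤ m0) :
    Type1 k m0 m1 S ∨ Type6 m0 m1 S := by
  rcases h0.eq_or_lt with h0 | h0
  · exact .inl (.inr (.inr ⟨hk, hOR, h1, h0, hNZL⟩))
  · exact .inr ⟨h1, h0, hOR, hNZL⟩

lemma type1_of_update_one {B : FSeq n} {p : Fin n} (hBp : B p = .star) (h1 : count1 B = m1)
    (hk : count1 (update B p .one) + 1 ≤ k) (hOR : OneRight (update B p .one)) :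
    Type1 k m0 m1 (update B p .one) := by
  have : count1 (update B p .one) = count1 B + 1 := card_filter_update_self_eq (by simp [hBp])
  exact .inl ⟨hk, hOR, by omega⟩

lemma Type5.type1_or_type6_of_swap {S : FSeq n} {i p : Fin n} (h5 : Type5 m0 m1 S)
    (hi : IsLeftmostZero S i) (hp : S p = .star) (hpi : p ≠ i)
    (hk : count1 (update (update S i .star) p .zero) + 1 ≤ k)
    (hOR : OneRight (update (update S i .star) p .zero)) :
    Type1 k m0 m1 (update (update S i .star) p .zero) ∨
      Type6 m0 m1 (update (update S i .star) p .zero) := by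
  have hBp : update S i .star p = .star := by rw [update_of_ne hpi, hp]
  have h1 : count1 (update (update S i .star) p .zero) = count1 S := by
    rw [count1, card_filter_update_of_ne_of_ne (by simp [hBp]) (by simp),
      card_filter_update_of_ne_of_ne (by simp [hi.1]) (by simp)]
    rfl
  have h0 : count0 (update (update S i .star) p .zero) = count0 S := by
    rw [count0, card_filter_update_self_eq (by simp [hBp]),
      card_filter_update_add_one hi.1 (by simp)]
    rfl
  exact type1_or_type6_of_noZeroLeft hk hOR (hi.noZeroLeft_update_update h5.2.2.2 hp)
    (h1.trans h5.1) (h0.trans_le h5.2.1)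

end

theorem vpath_from_type5_general (n k m0 m1 : ℕ)
    (P : VPath n k m0 m1 0) (h0 : Type5 m0 m1 (P.a 0)) :
    Type1 k m0 m1 (P.a 1) ∨ Type6 m0 m1 (P.a 1) := by
  have hmatch : Vmatch k m0 m1 (P.a 0) (P.b 0) := P.mem 0
  obtain ⟨i0, hi0, hb⟩ := hmatch.apply3_of_type5 h0
  obtain ⟨hones0, hstars0⟩ := (P.face_a 0).count_bounds h0.2.2.1.1
  have hb1 : count1 (P.b 0) = count1 (P.a 0) := by
    rw [hb]; exact card_filter_update_of_ne_of_ne (by simp [hi0.1]) (by simp)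
  have hbs : countStar (P.b 0) = countStar (P.a 0) + 1 := by
    rw [hb]; exact card_filter_update_self_eq (by simp [hi0.1])
  have hORb : OneRight (P.b 0) := hb ▸ hi0.oneRight_update_star h0.2.2.2 h0.2.2.1
  have hstar1 := (P.codim_right 0).hasStar (P.face_a 1) (by omega)
  have hk1 := ((P.face_a 1).count_bounds hstar1).1
  obtain ⟨p, hbp, hap, ha1⟩ :=
    exists_eq_update_of_codim1 (P.face_a 1) (P.codim_right 0) (by omega)
  have hOR1 : OneRight (P.a 1) := by
    rw [ha1] at hstar1 ⊢; exact hORb.update_of_apply_eq_star hbp hap hstar1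
  cases hℓ : P.a 1 p with
  | star => exact absurd hℓ hap
  | one =>
    rw [hℓ] at ha1
    rw [ha1] at hk1 hOR1 ⊢
    exact .inl (type1_of_update_one hbp (hb1.trans h0.1) hk1 hOR1)
  | zero =>
    rw [hℓ] at ha1
    have hpi0 : p ≠ i0 := by
      rintro rfl
      refine P.step_ne 0 (show P.a 0 = P.a 1 from ?_)
      rw [ha1, hb, update_idem, ← hi0.1, update_eq_self]
    have hap0 : P.a 0 p = .star := by rwa [hb, update_of_ne hpi0] at hbp
    rw [ha1, hb] at hk1 hOR1 ⊢
    exact h0.type1_or_type6_of_swap hi0 hap0 hpi0 hk1 hOR1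

/-- In a `V`-path `a₀, b₀, a₁` with `a₀` of type 5, the face `a₁` is of
type 1 or of type 6. -/
theorem vpath_from_type5 (n k m0 m1 : ℕ) (hk1 : 1 ≤ k) (hk2 : k ≤ n - 1)
    (hm0 : m0 + k + 1 ≤ n) (hm1l : 1 ≤ m1) (hm1u : m1 + 1 ≤ k)
    (P : VPath n k m0 m1 0) (h0 : Type5 m0 m1 (P.a 0)) :
    Type1 k m0 m1 (P.a 1) ∨ Type6 m0 m1 (P.a 1) :=
  vpath_from_type5_general n k m0 m1 P h0
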